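/- Let L_c, L_s > 0 and let H₀ and Γ₀ be independent random variables, Gamma-distributed with shape L_c and rate L_c, and with shape L_s and rate L_s, respectively (each has mean 1). Then −lim_{ρ→∞} log( E[ (1 + ρH₀ + ρΓ₀)^{-1} ] ) / log ρ exists and equals min{L_s + L_c, 1}. -/

import Mathlib

open MeasureTheory ProbabilityTheory Filter

/-!
Upper bound: for `c ∈ [0, 1]` and `c₁ + c₂ = c` with `c₁, c₂ ≥ 0`,
`(1 + ρ(h + g))⁻¹ ≤ (ρ(h + g))^{-c} ≤ ρ^{-c} h^{-c₁} g^{-c₂}`, and a Gamma variable of shape `L`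
has finite negative moments of every order below `L`; hence `E = O(ρ^{-c})` for every
`c < min (L_s + L_c) 1`.

Lower bound: a Gamma law of shape `L` gives mass `≳ t^L` to `[0, t]`, and on the box `[0, t]²` the
integrand is at least `(1 + 2ρt)⁻¹`. The box `t = 1/ρ` gives `E ≳ ρ^{-(L_s + L_c)}`, the box
`t = 1` gives `E ≳ ρ⁻¹`.
-/

open Real Set Topology

theorem tendsto_neg_log_div_log_of_rpow_bounds {f : ℝ → ℝ} {L : ℝ}
    (hlow : ∃ c > 0, ∀ᶠ ρ in atTop, c * ρ ^ (-L) ≤ f ρ)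
    (hup : ∀ᶠ a in 𝓝[<] L, ∃ C, ∀ᶠ ρ in atTop, f ρ ≤ C * ρ ^ (-a)) :
    Tendsto (fun ρ => -(log (f ρ) / log ρ)) atTop (𝓝 L) := by
  obtain ⟨c, hc, hcf⟩ := hlow
  have hfpos : ∀ᶠ ρ in atTop, 0 < f ρ := by
    filter_upwards [hcf, eventually_gt_atTop 0] with ρ hρf hρ
    exact lt_of_lt_of_le (by positivity) hρf
  have hlim (a K : ℝ) : Tendsto (fun ρ => a - K / log ρ) atTop (𝓝 a) := by
    simpa using tendsto_const_nhds.sub (tendsto_const_nhds.div_atTop tendsto_log_atTop)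
  refine tendsto_order.2 ⟨fun b hb => ?_, fun b hb => ?_⟩
  · obtain ⟨a, ⟨C, hC⟩, hba, -⟩ := (hup.and (Ioo_mem_nhdsLT hb)).exists
    filter_upwards [(hlim a (log C)).eventually (lt_mem_nhds hba), hC, hfpos,
      tendsto_log_atTop.eventually_gt_atTop 0, eventually_gt_atTop 0] with ρ hbρ hCρ hf hT hρ
    have hCpos : 0 < C := pos_of_mul_pos_left (hf.trans_le hCρ) (rpow_nonneg hρ.le _)
    have hlogf : log (f ρ) ≤ log C - a * log ρ := by
      rw [sub_eq_add_neg, ← neg_mul, ← log_rpow hρ, ← log_mul hCpos.ne' (by positivity)]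
      exact log_le_log hf hCρ
    refine hbρ.trans_le ?_
    rw [← neg_div, le_div_iff₀ hT, sub_mul, div_mul_cancel₀ _ hT.ne']
    linarith
  · filter_upwards [(hlim L (log c)).eventually (gt_mem_nhds hb), hcf,
      tendsto_log_atTop.eventually_gt_atTop 0, eventually_gt_atTop 0] with ρ hbρ hcρ hT hρ
    have hlogf : log c - L * log ρ ≤ log (f ρ) := by
      rw [sub_eq_add_neg, ← neg_mul, ← log_rpow hρ, ← log_mul hc.ne' (by positivity)]
      exact log_le_log (by positivity) hcρ
    refine lt_of_le_of_lt ?_ hbρ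
    rw [← neg_div, div_le_iff₀ hT, sub_mul, div_mul_cancel₀ _ hT.ne']
    linarith

namespace ProbabilityTheory

variable {a r : ℝ}

lemma measurable_gammaPDF (a r : ℝ) : Measurable (gammaPDF a r) :=
  (measurable_gammaPDFReal a r).ennreal_ofReal

lemma ae_pos_gammaMeasure (a r : ℝ) : ∀ᵐ x ∂gammaMeasure a r, 0 < x := by
  rw [gammaMeasure, ae_withDensity_iff (measurable_gammaPDF a r)]
  filter_upwards [Measure.ae_ne volume 0] with x hx0 hpdf
  exact lt_of_le_of_ne (not_lt.1 fun hx => hpdf (gammaPDF_of_neg hx)) hx0.symm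

lemma integrable_gammaPDFReal (ha : 0 < a) (hr : 0 < r) : Integrable (gammaPDFReal a r) := by
  refine (integrable_toReal_of_lintegral_ne_top (f := gammaPDF a r)
    (measurable_gammaPDF a r).aemeasurable (by simp [ha, hr])).congr ?_
  exact ae_of_all _ fun x => ENNReal.toReal_ofReal (gammaPDFReal_nonneg ha hr x)

lemma rpow_neg_mul_gammaPDFReal {s x : ℝ} (hsa : s < a) (hr : 0 < r) (hx : x ≠ 0) :
    x ^ (-s) * gammaPDFReal a r x =
      r ^ s * Gamma (a - s) / Gamma a * gammaPDFReal (a - s) r x := by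
  rcases hx.lt_or_gt with hneg | hpos
  · simp [gammaPDFReal, not_le.2 hneg]
  have hΓ : Gamma (a - s) ≠ 0 := (Gamma_pos_of_pos (sub_pos.2 hsa)).ne'
  have hr_pow : r ^ s * r ^ (a - s) = r ^ a := by rw [← rpow_add hr]; ring_nf
  have hx_pow : x ^ (-s) * x ^ (a - 1) = x ^ (a - s - 1) := by rw [← rpow_add hpos]; ring_nf
  simp only [gammaPDFReal, if_pos hpos.le]
  rw [← hr_pow, ← hx_pow]
  field_simp

lemma integrable_rpow_neg_gammaMeasure {s : ℝ} (ha : 0 < a) (hr : 0 < r) (hsa : s < a) :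
    Integrable (fun x => x ^ (-s)) (gammaMeasure a r) := by
  rw [gammaMeasure, integrable_withDensity_iff (measurable_gammaPDF a r)
    (ae_of_all _ fun _ => ENNReal.ofReal_lt_top)]
  refine ((integrable_gammaPDFReal (sub_pos.2 hsa) hr).const_mul
    (r ^ s * Gamma (a - s) / Gamma a)).congr ?_
  filter_upwards [Measure.ae_ne volume 0] with x hx
  rw [gammaPDF, ENNReal.toReal_ofReal (gammaPDFReal_nonneg ha hr x),
    rpow_neg_mul_gammaPDFReal hsa hr hx]

lemma gammaMeasure_Icc_zero_ge {t : ℝ} (ha : 0 < a) (hr : 0 < r) (ht0 : 0 ≤ t) (ht1 : t ≤ 1) :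
    r ^ a / Gamma a * exp (-r) / a * t ^ a ≤ (gammaMeasure a r).real (Icc 0 t) := by
  have := isProbabilityMeasure_gammaMeasure ha hr
  set c := r ^ a / Gamma a * exp (-r)
  have hint : Integrable (fun x => c * x ^ (a - 1)) (volume.restrict (Icc 0 t)) := by
    rw [← IntegrableOn, integrableOn_Icc_iff_integrableOn_Ioc,
      ← intervalIntegrable_iff_integrableOn_Ioc_of_le ht0]
    exact (intervalIntegral.intervalIntegrable_rpow' (by linarith)).const_mul c
  have hval : ∫ x in Icc 0 t, c * x ^ (a - 1) = c / a * t ^ a := by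
    rw [integral_Icc_eq_integral_Ioc, ← intervalIntegral.integral_of_le ht0,
      intervalIntegral.integral_const_mul, integral_rpow (Or.inl (by linarith)),
      zero_rpow (by linarith)]
    ring_nf
  have hpdf : ∀ x ∈ Icc 0 t, ENNReal.ofReal (c * x ^ (a - 1)) ≤ gammaPDF a r x := by
    intro x hx
    rw [gammaPDF_of_nonneg hx.1]
    refine ENNReal.ofReal_le_ofReal ?_
    have hexp : exp (-r) ≤ exp (-(r * x)) := exp_le_exp.2 (by nlinarith [hx.1, hx.2])
    have : 0 ≤ r ^ a / Gamma a * x ^ (a - 1) := by have := rpow_nonneg hx.1 (a - 1); positivity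
    calc c * x ^ (a - 1) = r ^ a / Gamma a * x ^ (a - 1) * exp (-r) := by ring
      _ ≤ _ := by gcongr
  rw [measureReal_def, ← ENNReal.ofReal_le_iff_le_toReal (measure_ne_top _ _), ← hval,
    ofReal_integral_eq_lintegral_ofReal hint
      ((ae_restrict_iff' measurableSet_Icc).2 (ae_of_all _ fun x hx =>
        mul_nonneg (by positivity) (rpow_nonneg hx.1 _))),
    gammaMeasure, withDensity_apply _ measurableSet_Icc]
  exact setLIntegral_mono (measurable_gammaPDF a r) hpdf

end ProbabilityTheory

lemma inv_one_add_le_rpow_neg {x c : ℝ} (hx : 0 < x) (hc0 : 0 ≤ c) (hc1 : c ≤ 1) :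
    (1 + x)⁻¹ ≤ x ^ (-c) :=
  calc (1 + x)⁻¹ = (1 + x) ^ (-1 : ℝ) := (rpow_neg_one _).symm
    _ ≤ (1 + x) ^ (-c) := rpow_le_rpow_of_exponent_le (by linarith) (by linarith)
    _ ≤ x ^ (-c) := rpow_le_rpow_of_nonpos hx (by linarith) (by linarith)

lemma rpow_neg_add_le_mul {x y a b : ℝ} (hx : 0 < x) (hy : 0 < y) (ha : 0 ≤ a) (hb : 0 ≤ b) :
    (x + y) ^ (-(a + b)) ≤ x ^ (-a) * y ^ (-b) := by
  rw [neg_add, rpow_add (by positivity)]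
  exact mul_le_mul (rpow_le_rpow_of_nonpos hx (by linarith) (by linarith))
    (rpow_le_rpow_of_nonpos hy (by linarith) (by linarith)) (by positivity) (by positivity)

noncomputable def uncodedDistortion (μ ν : Measure ℝ) (ρ : ℝ) : ℝ :=
  ∫ p : ℝ × ℝ, (1 + ρ * p.1 + ρ * p.2)⁻¹ ∂μ.prod ν

section uncodedDistortion

variable {μ ν : Measure ℝ}

lemma uncodedDistortion_le [SFinite μ] [SFinite ν] (hμ : ∀ᵐ x ∂μ, 0 < x) (hν : ∀ᵐ y ∂ν, 0 < y)
    {a b ρ : ℝ} (ha : 0 ≤ a) (hb : 0 ≤ b) (hab : a + b ≤ 1) (hρ : 0 < ρ)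
    (hμa : Integrable (fun x => x ^ (-a)) μ) (hνb : Integrable (fun y => y ^ (-b)) ν) :
    uncodedDistortion μ ν ρ ≤ (∫ x, x ^ (-a) ∂μ) * (∫ y, y ^ (-b) ∂ν) * ρ ^ (-(a + b)) := by
  have hpos : ∀ᵐ p ∂μ.prod ν, 0 < p.1 ∧ 0 < p.2 :=
    (Measure.quasiMeasurePreserving_fst.ae hμ).and (Measure.quasiMeasurePreserving_snd.ae hν)
  have hbound : ∀ᵐ p ∂μ.prod ν,
      (1 + ρ * p.1 + ρ * p.2)⁻¹ ≤ ρ ^ (-(a + b)) * (p.1 ^ (-a) * p.2 ^ (-b)) := by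
    filter_upwards [hpos] with p ⟨h1, h2⟩
    calc (1 + ρ * p.1 + ρ * p.2)⁻¹ = (1 + ρ * (p.1 + p.2))⁻¹ := by ring_nf
      _ ≤ (ρ * (p.1 + p.2)) ^ (-(a + b)) :=
        inv_one_add_le_rpow_neg (by positivity) (by linarith) hab
      _ = ρ ^ (-(a + b)) * (p.1 + p.2) ^ (-(a + b)) := mul_rpow hρ.le (by positivity)
      _ ≤ ρ ^ (-(a + b)) * (p.1 ^ (-a) * p.2 ^ (-b)) := by
        gcongr
        exact rpow_neg_add_le_mul h1 h2 ha hb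
  have hdom := (hμa.mul_prod hνb).const_mul (ρ ^ (-(a + b)))
  have hint : Integrable (fun p : ℝ × ℝ => (1 + ρ * p.1 + ρ * p.2)⁻¹) (μ.prod ν) := by
    refine hdom.mono' (by fun_prop) ?_
    filter_upwards [hpos, hbound] with p ⟨h1, h2⟩ hp
    rwa [norm_of_nonneg (by positivity)]
  calc uncodedDistortion μ ν ρ ≤ ∫ p, ρ ^ (-(a + b)) * (p.1 ^ (-a) * p.2 ^ (-b)) ∂μ.prod ν :=
        integral_mono_ae hint hdom hbound
    _ = _ := by
      rw [integral_const_mul, integral_prod_mul (fun x => x ^ (-a)) (fun y => y ^ (-b)), mul_comm]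

lemma le_uncodedDistortion [IsFiniteMeasure μ] [IsFiniteMeasure ν] (hμ : ∀ᵐ x ∂μ, 0 ≤ x)
    (hν : ∀ᵐ y ∂ν, 0 ≤ y) {ρ t : ℝ} (hρ : 0 ≤ ρ) :
    (1 + 2 * ρ * t)⁻¹ * (μ.real (Icc 0 t) * ν.real (Icc 0 t)) ≤ uncodedDistortion μ ν ρ := by
  have hnonneg : ∀ᵐ p ∂μ.prod ν, 0 ≤ p.1 ∧ 0 ≤ p.2 :=
    (Measure.quasiMeasurePreserving_fst.ae hμ).and (Measure.quasiMeasurePreserving_snd.ae hν)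
  have hint : Integrable (fun p : ℝ × ℝ => (1 + ρ * p.1 + ρ * p.2)⁻¹) (μ.prod ν) := by
    refine (integrable_const (1 : ℝ)).mono' (by fun_prop) ?_
    filter_upwards [hnonneg] with p ⟨h1, h2⟩
    rw [norm_of_nonneg (by positivity)]
    exact inv_le_one_of_one_le₀ (by nlinarith)
  rw [← measureReal_prod_prod]
  calc _ ≤ ∫ p in Icc 0 t ×ˢ Icc 0 t, (1 + ρ * p.1 + ρ * p.2)⁻¹ ∂μ.prod ν := by
        refine setIntegral_ge_of_const_le_real (measurableSet_Icc.prod measurableSet_Icc)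
          (measure_ne_top _ _) (fun p ⟨hp1, hp2⟩ => ?_) hint.integrableOn
        have : ρ * p.1 + ρ * p.2 ≤ 2 * ρ * t := by nlinarith [hp1.2, hp2.2]
        exact inv_anti₀ (by nlinarith [hp1.1, hp2.1]) (by linarith)
    _ ≤ uncodedDistortion μ ν ρ :=
        setIntegral_le_integral hint (hnonneg.mono fun p ⟨h1, h2⟩ => by positivity)

end uncodedDistortion

section gammaMeasure

variable {a r b s : ℝ}

lemma uncodedDistortion_gammaMeasure_le (ha : 0 < a) (hr : 0 < r) (hb : 0 < b) (hs : 0 < s)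
    {c : ℝ} (hc0 : 0 ≤ c) (hc1 : c ≤ 1) (hcab : c < a + b) :
    ∃ C, ∀ᶠ ρ in atTop,
      uncodedDistortion (gammaMeasure a r) (gammaMeasure b s) ρ ≤ C * ρ ^ (-c) := by
  have hab : 0 < a + b := by linarith
  -- split `c` in proportion to the shapes, so that each part stays below its shape
  have hca : c * a / (a + b) < a := by rw [div_lt_iff₀ hab]; nlinarith
  have hcb : c * b / (a + b) < b := by rw [div_lt_iff₀ hab]; nlinarith
  have hsum : c * a / (a + b) + c * b / (a + b) = c := by field_simp
  have := isProbabilityMeasure_gammaMeasure ha hr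
  have := isProbabilityMeasure_gammaMeasure hb hs
  refine ⟨(∫ x, x ^ (-(c * a / (a + b))) ∂gammaMeasure a r) *
    ∫ y, y ^ (-(c * b / (a + b))) ∂gammaMeasure b s, ?_⟩
  filter_upwards [eventually_gt_atTop 0] with ρ hρ
  calc _ ≤ _ := uncodedDistortion_le (ae_pos_gammaMeasure a r) (ae_pos_gammaMeasure b s)
        (by positivity) (by positivity) (hsum.le.trans hc1) hρ
        (integrable_rpow_neg_gammaMeasure ha hr hca) (integrable_rpow_neg_gammaMeasure hb hs hcb)
    _ = _ := by rw [hsum]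

lemma le_uncodedDistortion_gammaMeasure (ha : 0 < a) (hr : 0 < r) (hb : 0 < b) (hs : 0 < s) :
    ∃ c > 0, ∀ᶠ ρ in atTop,
      c * ρ ^ (-min (a + b) 1) ≤ uncodedDistortion (gammaMeasure a r) (gammaMeasure b s) ρ := by
  have := isProbabilityMeasure_gammaMeasure ha hr
  have := isProbabilityMeasure_gammaMeasure hb hs
  set Ca := r ^ a / Gamma a * exp (-r) / a
  set Cb := s ^ b / Gamma b * exp (-s) / b
  refine ⟨Ca * Cb / 3, by positivity, ?_⟩
  filter_upwards [eventually_ge_atTop 1] with ρ hρ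
  have hρ0 : 0 < ρ := by linarith
  have hbox : ∀ t ∈ Icc (0 : ℝ) 1, (1 + 2 * ρ * t)⁻¹ * (Ca * t ^ a * (Cb * t ^ b)) ≤
      uncodedDistortion (gammaMeasure a r) (gammaMeasure b s) ρ := by
    rintro t ⟨ht0, ht1⟩
    refine le_trans ?_ (le_uncodedDistortion ((ae_pos_gammaMeasure a r).mono fun _ => le_of_lt)
      ((ae_pos_gammaMeasure b s).mono fun _ => le_of_lt) (t := t) hρ0.le)
    gcongr
    · exact gammaMeasure_Icc_zero_ge ha hr ht0 ht1
    · exact gammaMeasure_Icc_zero_ge hb hs ht0 ht1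
  rcases le_total (a + b) 1 with hab | hab
  · convert hbox ρ⁻¹ ⟨by positivity, inv_le_one_of_one_le₀ hρ⟩ using 1
    rw [min_eq_left hab, inv_rpow (by linarith), inv_rpow (by linarith), rpow_neg (by linarith),
      rpow_add (by linarith)]
    field_simp
    norm_num
  · refine le_trans ?_ (hbox 1 ⟨zero_le_one, le_rfl⟩)
    rw [min_eq_right hab, rpow_neg_one, one_rpow, one_rpow, mul_one, mul_one, mul_one]
    calc Ca * Cb / 3 * ρ⁻¹ = (3 * ρ)⁻¹ * (Ca * Cb) := by ring
      _ ≤ (1 + 2 * ρ)⁻¹ * (Ca * Cb) := by gcongr; linarith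

end gammaMeasure

/-- distortion exponent of uncoded transmission for Nakagami fading
channel and side information: `Δ_u = min{L_s + L_c, 1}`. -/
theorem uncoded_exponent
    (Lc Ls : ℝ) (hLc : 0 < Lc) (hLs : 0 < Ls) :
    Tendsto (fun ρ : ℝ =>
        -(Real.log (∫ p : ℝ × ℝ, (1 + ρ * p.1 + ρ * p.2)⁻¹
            ∂((gammaMeasure Lc Lc).prod (gammaMeasure Ls Ls))) / Real.log ρ))
      atTop (nhds (min (Ls + Lc) 1)) := by
  have hL : 0 < min (Ls + Lc) 1 := lt_min (by linarith) one_pos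
  refine tendsto_neg_log_div_log_of_rpow_bounds
    (f := uncodedDistortion (gammaMeasure Lc Lc) (gammaMeasure Ls Ls)) ?_ ?_
  · rw [add_comm]
    exact le_uncodedDistortion_gammaMeasure hLc hLc hLs hLs
  · filter_upwards [Ioo_mem_nhdsLT hL] with c ⟨hc0, hcL⟩
    exact uncodedDistortion_gammaMeasure_le hLc hLc hLs hLs hc0.le
      (hcL.le.trans (min_le_right _ _)) (by linarith [min_le_left (Ls + Lc) 1])
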